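/- arXiv:1311.6789 — 4 statements merged into one kernel-verified Lean document; each statement's English description precedes it below -/
import Mathlib

section
/- Suppose V ⊆ W are transitive classes (or sets) closed under intersection with their elements, δ is a cardinal, and the pair V ⊆ W satisfies the δ-approximation property. Then for any A ∈ W with A ⊆ δ: A ∈ V if and only if for every bounded subset a ⊆ δ with a ∈ V and |a| < δ, the intersection a ∩ A is an element of the collection P_δ(δ)^V of V-subsets of δ of size less than δ. Consequently, P(δ)^V is definable in W from the parameter P_δ(δ)^V. -/
open Cardinal

namespace GroundDef

/-- The intersection of two ZFC sets. -/
noncomputable def int (a A : ZFSet) : ZFSet := a.sep (fun z => z ∈ A)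

/-- `x` has size less than (the cardinal) `δ`. -/
def SmallLt (δ x : ZFSet) : Prop := #x.toSet < #δ.toSet

/-- The pair `V ⊆ W` satisfies the `δ`-approximation property: any `A ∈ W`
with `A ⊆ V` all of whose intersections with sets in `V` of size `< δ` lie in
`V` is itself in `V`. -/
def ApproxProp (V W : Set ZFSet) (δ : ZFSet) : Prop :=
  ∀ A : ZFSet, A ∈ W → (∀ z ∈ A, z ∈ V) →
    (∀ a : ZFSet, a ∈ V → SmallLt δ a → int a A ∈ V) → A ∈ V

lemma mem_int {a A z : ZFSet} : z ∈ int a A ↔ z ∈ a ∧ z ∈ A := ZFSet.mem_sep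

lemma int_subset (a A : ZFSet) : int a A ⊆ a := fun _ hz => (mem_int.1 hz).1

lemma smallLt_of_subset {δ x y : ZFSet} (h : x ⊆ y) (hy : SmallLt δ y) : SmallLt δ x := by
  refine lt_of_le_of_lt ?_ hy
  exact Cardinal.mk_le_mk_of_subset (fun z hz => h hz)

/-- Suppose `V ⊆ W` are transitive classes closed under intersections with
their elements, `δ` is a cardinal with `δ ∈ V`, and the pair `V ⊆ W` satisfies
the `δ`-approximation property.  Then for `A ∈ W` with `A ⊆ δ`: `A ∈ V` iff
every intersection `a ∩ A` with a set `a ∈ V`, `a ⊆ δ`, `|a| < δ` belongs to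
`P_δ(δ)^V`, the collection of subsets of `δ` in `V` of size `< δ`.
(Consequently `P(δ)^V` is definable in `W` from the parameter `P_δ(δ)^V`.) -/
theorem approx_definability (V W : Set ZFSet) (δ : ZFSet)
    (hVW : V ⊆ W)
    (hVtrans : ∀ x ∈ V, ∀ y : ZFSet, y ∈ x → y ∈ V)
    (hWtrans : ∀ x ∈ W, ∀ y : ZFSet, y ∈ x → y ∈ W)
    (hVint : ∀ x ∈ V, ∀ y ∈ V, int x y ∈ V)
    (hWint : ∀ x ∈ W, ∀ y ∈ W, int x y ∈ W)
    (hδV : δ ∈ V)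
    (happrox : ApproxProp V W δ) :
    ∀ A : ZFSet, A ∈ W → A ⊆ δ →
      (A ∈ V ↔ ∀ a : ZFSet, a ∈ V → a ⊆ δ → SmallLt δ a →
        (int a A ∈ V ∧ int a A ⊆ δ ∧ SmallLt δ (int a A))) := by
  intro A hAW hAδ
  constructor
  · intro hAV a haV haδ hasm
    refine ⟨hVint a haV A hAV, fun z hz => haδ (int_subset a A hz),
      smallLt_of_subset (int_subset a A) hasm⟩
  · intro h
    apply happrox A hAW
    · intro z hz
      exact hVtrans δ hδV z (hAδ hz)
    · intro a haV hasm
      have key : int a A = int (int a δ) A := by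
        apply ZFSet.ext
        intro z
        simp only [mem_int]
        exact ⟨fun ⟨h1, h2⟩ => ⟨⟨h1, hAδ h2⟩, h2⟩, fun ⟨⟨h1, _⟩, h2⟩ => ⟨h1, h2⟩⟩
      rw [key]
      exact (h (int a δ) (hVint a haV δ hδV) (fun z hz => (mem_int.1 hz).2)
        (smallLt_of_subset (int_subset a δ) hasm)).1

end GroundDef
end

section
/- Suppose M ⊆ N are models of ZFC (as transitive sets or classes), P ∈ M is a partial order, the powerset of P as computed in M is an element of M, and N contains a filter G ⊆ P meeting every dense subset of P that lies in M, with G ∉ M. Then M is not an elementary submodel of N. -/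
/-!
`M` computes the powerset of `P` as an element `PP`, so in `M` every subset of `P` belongs to
`PP` (transitivity of `M` makes its notion of subset the true one). In `N` the new subset `G` of `P` is not in `PP`. The first-order statement
"some subset of `P` is not in `PP`", with parameters `P, PP ∈ M`, thus holds in `N` but not
in `M`.
-/

open FirstOrder

/-- The language of set theory: a single binary relation `∈`. -/
def memLang : Language :=
  ⟨fun _ => Empty, fun n => match n with | 2 => PUnit | _ => Empty⟩

/-- Any class of ZFC sets is a structure in the language of set theory,
interpreting the binary relation as membership. -/
instance memLangStructure (S : Set ZFSet) : memLang.Structure S where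
  funMap := fun {_} f _ => f.elim
  RelMap := fun {n} r x =>
    match n, r, x with
    | 2, _, x => ((x 0 : ZFSet) ∈ (x 1 : ZFSet))

/-- Realization of a formula of the language of set theory in a class of ZFC
sets, with free variables interpreted by `v`. -/
def RealizeIn (S : Set ZFSet) {n : ℕ} (φ : memLang.BoundedFormula Empty n)
    (v : Fin n → S) : Prop :=
  φ.Realize (fun e => e.elim) v

/-- A transitive set `M` is a model of ZFC: it is transitive (hence satisfies
extensionality and foundation) and satisfies pairing, union, powerset,
infinity, the separation and collection schemas for first-order formulas in
the language of set theory, and choice. -/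
structure IsZFCModel (M : ZFSet) : Prop where
  transitive : M.IsTransitive
  empty_mem : (∅ : ZFSet) ∈ M
  pair_mem : ∀ x ∈ M, ∀ y ∈ M, ({x, y} : ZFSet) ∈ M
  union_mem : ∀ x ∈ M, (ZFSet.sUnion x : ZFSet) ∈ M
  powerset_mem : ∀ x ∈ M, ∃ p ∈ M, ∀ z ∈ M, (z ∈ p ↔ z ⊆ x)
  omega_mem : ZFSet.omega ∈ M
  separation : ∀ (n : ℕ) (φ : memLang.BoundedFormula Empty (n + 1))
    (v : Fin n → M.toSet), ∀ x ∈ M, ∃ s ∈ M, ∀ z : ZFSet,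
      z ∈ s ↔ ∃ hz : z ∈ M, z ∈ x ∧ RealizeIn M.toSet φ (Fin.snoc v ⟨z, hz⟩)
  collection : ∀ (n : ℕ) (φ : memLang.BoundedFormula Empty (n + 2))
    (v : Fin n → M.toSet), ∀ x ∈ M,
    (∀ z, ∀ hz : z ∈ M, z ∈ x → ∃ w, ∃ hw : w ∈ M,
      RealizeIn M.toSet φ (Fin.snoc (Fin.snoc v ⟨z, hz⟩) ⟨w, hw⟩)) →
    ∃ c ∈ M, ∀ z, ∀ hz : z ∈ M, z ∈ x → ∃ w, ∃ hw : w ∈ M, w ∈ c ∧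
      RealizeIn M.toSet φ (Fin.snoc (Fin.snoc v ⟨z, hz⟩) ⟨w, hw⟩)
  choice : ∀ F ∈ M, (∀ a ∈ F, a ≠ (∅ : ZFSet)) →
    (∀ a ∈ F, ∀ b ∈ F, a ≠ b → ¬∃ z : ZFSet, z ∈ a ∧ z ∈ b) →
    ∃ c ∈ M, ∀ a ∈ F, ∃ z : ZFSet, z ∈ c ∧ z ∈ a ∧
      ∀ w : ZFSet, w ∈ c → w ∈ a → w = z

/-- `M` is an elementary submodel of `N` (both transitive sets viewed as
`∈`-structures): every first-order formula of the language of set theory with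
parameters from `M` holds in `M` iff it holds in `N`. -/
def ElemSub (M N : ZFSet) (h : M ⊆ N) : Prop :=
  ∀ (n : ℕ) (φ : memLang.BoundedFormula Empty n) (v : Fin n → M.toSet),
    RealizeIn M.toSet φ v ↔ RealizeIn N.toSet φ (fun i => ⟨(v i).1, h (v i).2⟩)

open FirstOrder.Language

def memFormula {n : ℕ} (t u : memLang.Term (Empty ⊕ Fin n)) : memLang.BoundedFormula Empty n :=
  Relations.boundedFormula₂ (PUnit.unit : memLang.Relations 2) t u

-- `∃ x, (∀ z, z ∈ x → z ∈ &0) ∧ x ∉ &1`; under the binders, `x` is `&2` and `z` is `&3`.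
def existsSubsetNotMem : memLang.BoundedFormula Empty 2 :=
  ((memFormula (&3) (&2) ⟹ memFormula (&3) (&0 : memLang.Term (Empty ⊕ Fin 4))).all ⊓
    ∼(memFormula (&2) (&1 : memLang.Term (Empty ⊕ Fin 3)))).ex

lemma realizeIn_existsSubsetNotMem (S : Set ZFSet) (v : Fin 2 → S) :
    RealizeIn S existsSubsetNotMem v ↔ ∃ x : S, (∀ z : S, (z : ZFSet) ∈ (x : ZFSet) →
      (z : ZFSet) ∈ (v 0 : ZFSet)) ∧ (x : ZFSet) ∉ (v 1 : ZFSet) := by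
  simp only [RealizeIn, existsSubsetNotMem, memFormula, BoundedFormula.realize_ex,
    BoundedFormula.realize_inf, BoundedFormula.realize_all, BoundedFormula.realize_imp,
    BoundedFormula.realize_not, Subtype.forall, Subtype.exists]
  tauto

lemma ZFSet.mem_of_subset_of_elemSub {M N : ZFSet} {hMN : M ⊆ N} (h : ElemSub M N hMN)
    (hM : M.IsTransitive) {P PP : ZFSet} (hPM : P ∈ M) (hPPM : PP ∈ M)
    (hPP : ∀ z : ZFSet, z ∈ PP ↔ z ∈ M ∧ z ⊆ P) {y : ZFSet} (hyN : y ∈ N) (hyP : y ⊆ P) :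
    y ∈ M := by
  by_contra hyM
  have key := h 2 existsSubsetNotMem ![⟨P, hPM⟩, ⟨PP, hPPM⟩]
  simp only [realizeIn_existsSubsetNotMem, Matrix.cons_val_zero, Matrix.cons_val_one] at key
  obtain ⟨x, hxP, hxPP⟩ := key.mpr ⟨⟨y, hyN⟩, fun _ hz => hyP hz, fun hy => hyM ((hPP y).mp hy).1⟩
  exact hxPP ((hPP x).mpr ⟨x.2, fun z hz => hxP ⟨z, hM x.1 x.2 hz⟩ hz⟩)

theorem not_elementary_of_generic_general (M N : ZFSet) (hMN : M ⊆ N)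
    (hM : IsZFCModel M)
    (P : ZFSet) (hPM : P ∈ M)
    (PP : ZFSet) (hPPM : PP ∈ M)
    (hPP : ∀ z : ZFSet, z ∈ PP ↔ z ∈ M ∧ z ⊆ P)
    (G : ZFSet) (hGN : G ∈ N) (hGP : G ⊆ P)
    (hGnotM : G ∉ M) :
    ¬ ElemSub M N hMN :=
  fun h => hGnotM (ZFSet.mem_of_subset_of_elemSub h hM.transitive hPM hPPM hPP hGN hGP)

/-- Suppose `M ⊆ N` are transitive models of ZFC, `P ∈ M` is a partial order
(with order relation `R ∈ M`, coded as a set of Kuratowski pairs, `p ≤ q` iff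
`pair p q ∈ R`), the powerset of `P` as computed in `M` is an element of `M`,
and `N` contains a filter `G ⊆ P` meeting every dense subset of `P` lying in
`M`, with `G ∉ M`.  Then `M` is not an elementary submodel of `N`. -/
theorem not_elementary_of_generic (M N : ZFSet) (hMN : M ⊆ N)
    (hM : IsZFCModel M) (hN : IsZFCModel N)
    (P R : ZFSet) (hPM : P ∈ M) (hRM : R ∈ M)
    (hRP : R ⊆ P.prod P)
    (hrefl : ∀ p ∈ P, ZFSet.pair p p ∈ R)
    (hantisymm : ∀ p ∈ P, ∀ q ∈ P,
      ZFSet.pair p q ∈ R → ZFSet.pair q p ∈ R → p = q)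
    (htrans : ∀ p ∈ P, ∀ q ∈ P, ∀ r ∈ P,
      ZFSet.pair p q ∈ R → ZFSet.pair q r ∈ R → ZFSet.pair p r ∈ R)
    (PP : ZFSet) (hPPM : PP ∈ M)
    (hPP : ∀ z : ZFSet, z ∈ PP ↔ z ∈ M ∧ z ⊆ P)
    (G : ZFSet) (hGN : G ∈ N) (hGP : G ⊆ P) (hGne : G.Nonempty)
    (hup : ∀ p ∈ G, ∀ q ∈ P, ZFSet.pair p q ∈ R → q ∈ G)
    (hdir : ∀ p ∈ G, ∀ q ∈ G, ∃ r ∈ G,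
      ZFSet.pair r p ∈ R ∧ ZFSet.pair r q ∈ R)
    (hgen : ∀ D ∈ M, D ⊆ P → (∀ p ∈ P, ∃ q ∈ D, ZFSet.pair q p ∈ R) →
      ∃ q, q ∈ G ∧ q ∈ D)
    (hGnotM : G ∉ M) :
    ¬ ElemSub M N hMN :=
  not_elementary_of_generic_general M N hMN hM P hPM PP hPPM hPP G hGN hGP hGnotM
end

section
/- There exists a transitive set M of ordinal height ω + ω that is a model of Zermelo set theory (extensionality, pairing, union, powerset, infinity, separation, foundation) such that M satisfies 'for every ordinal α, V_α exists', but M is not the union of its von Neumann hierarchy; that is, M contains an element not belonging to any V_α^M. (Such an M can be obtained by closing V_{ω+ω} ∪ {Z(ω+ω)} under pairing, union, subsets, and powersets in ω many steps, where Z is the Zermelo ordinal function: Z(0) = ∅, Z(α+1) = {Z(α)}, Z(λ) = {Z(α) : α < λ}.) -/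
/-!
Take `M` to be the closure of `V_{ω+ω} ∪ {T}` under pairing, union, power set and subsets, formed
in `ω` stages, where `T = {ω, {ω}, {{ω}}, …}` has rank `ω + ω` but contains no ordinal beyond
`ω`. Let `ordinalHeight x` be the least ordinal above the ranks of all ordinals hereditarily in
`{x}`. Each closure operation raises it by at most two, and it is below `ω + ω` on `V_{ω+ω} ∪ {T}`;
since `ω + ω` is a limit, it stays below `ω + ω` on all of `M`. So the ordinals of `M` are those of
`V_{ω+ω}`, every `V_α^M` is the genuine `V_α ∈ V_{ω+ω}`, and `T ∈ M` lies in none of them.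
-/

open Ordinal Order

namespace ZFSet

universe u

open Classical in
noncomputable def ordinalHeight (x : ZFSet.{u}) : Ordinal.{u} :=
  (if x.IsOrdinal then succ (rank x) else 0) ⊔ ⨆ y : x, ordinalHeight y
termination_by x
decreasing_by exact y.2

theorem ordinalHeight_le_iff {x : ZFSet.{u}} {a : Ordinal.{u}} :
    ordinalHeight x ≤ a ↔
      (x.IsOrdinal → succ (rank x) ≤ a) ∧ ∀ y ∈ x, ordinalHeight y ≤ a := by
  rw [ordinalHeight, sup_le_iff, Ordinal.iSup_le_iff]
  split_ifs with h <;> simp [h]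

theorem ordinalHeight_le_ordinalHeight_of_mem {x y : ZFSet.{u}} (h : y ∈ x) :
    ordinalHeight y ≤ ordinalHeight x :=
  (ordinalHeight_le_iff.1 le_rfl).2 y h

theorem IsOrdinal.rank_lt_ordinalHeight {x : ZFSet.{u}} (h : x.IsOrdinal) :
    rank x < ordinalHeight x :=
  succ_le_iff.1 <| (ordinalHeight_le_iff.1 le_rfl).1 h

theorem ordinalHeight_le_succ_rank (x : ZFSet.{u}) : ordinalHeight x ≤ succ (rank x) := by
  induction x using inductionOn with
  | _ x ih =>
    refine ordinalHeight_le_iff.2 ⟨fun _ => le_rfl, fun y hy => (ih y hy).trans ?_⟩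
    exact (succ_le_of_lt (rank_lt_of_mem hy)).trans (le_succ _)

theorem ordinalHeight_le_succ {x : ZFSet.{u}} {a : Ordinal.{u}}
    (h : ∀ y ∈ x, ordinalHeight y ≤ a) : ordinalHeight x ≤ succ a := by
  refine ordinalHeight_le_iff.2 ⟨fun hx => succ_le_succ ?_, fun y hy => (h y hy).trans (le_succ a)⟩
  exact rank_le_iff.2 fun y hy => (hx.mem hy).rank_lt_ordinalHeight.trans_le (h y hy)

theorem ordinalHeight_le_succ_of_subset {x t : ZFSet.{u}} (h : x ⊆ t) :
    ordinalHeight x ≤ succ (ordinalHeight t) :=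
  ordinalHeight_le_succ fun _ hy => ordinalHeight_le_ordinalHeight_of_mem (h hy)

theorem not_isOrdinal_singleton {x : ZFSet.{u}} (hx : x ≠ ∅) : ¬ ({x} : ZFSet).IsOrdinal := by
  intro h
  obtain ⟨y, hy⟩ := (eq_empty_or_nonempty x).resolve_left hx
  have : y = x := mem_singleton.1 (h.mem_trans hy (mem_singleton.2 rfl))
  exact mem_irrefl x (this ▸ hy)

theorem ordinalHeight_singleton {x : ZFSet.{u}} (hx : x ≠ ∅) :
    ordinalHeight {x} = ordinalHeight x := by
  refine le_antisymm (ordinalHeight_le_iff.2 ⟨fun h => (not_isOrdinal_singleton hx h).elim, ?_⟩)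
    (ordinalHeight_le_ordinalHeight_of_mem (mem_singleton.2 rfl))
  intro y hy
  rw [mem_singleton.1 hy]

attribute [local instance] Classical.allZFSetDefinable

noncomputable def closureStep (S : ZFSet.{u}) : ZFSet.{u} :=
  ⋃₀ image powerset S ∪ image powerset S ∪ image sUnion S ∪
    ⋃₀ image (fun a => image (fun b => {a, b}) S) S

theorem mem_closureStep {S x : ZFSet.{u}} :
    x ∈ closureStep S ↔ (∃ t ∈ S, x ⊆ t) ∨ (∃ t ∈ S, powerset t = x) ∨
      (∃ t ∈ S, ⋃₀ t = x) ∨ ∃ a ∈ S, ∃ b ∈ S, {a, b} = x := by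
  simp only [closureStep, mem_union, mem_sUnion, mem_image, exists_exists_and_eq_and,
    mem_powerset, or_assoc]

theorem subset_closureStep (S : ZFSet.{u}) : S ⊆ closureStep S :=
  fun x hx => mem_closureStep.2 (Or.inl ⟨x, hx, subset_rfl⟩)

theorem IsTransitive.closureStep {S : ZFSet.{u}} (hS : S.IsTransitive) :
    (closureStep S).IsTransitive := by
  intro x hx y hy
  rcases mem_closureStep.1 hx with ⟨t, ht, hxt⟩ | ⟨t, ht, rfl⟩ | ⟨t, ht, rfl⟩ | ⟨a, ha, b, hb, rfl⟩
  · exact subset_closureStep S (hS t ht (hxt hy))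
  · exact mem_closureStep.2 (Or.inl ⟨t, ht, mem_powerset.1 hy⟩)
  · obtain ⟨z, hz, hyz⟩ := mem_sUnion.1 hy
    exact subset_closureStep S (hS z (hS t ht hz) hyz)
  · rcases mem_pair.1 hy with rfl | rfl
    · exact subset_closureStep S ha
    · exact subset_closureStep S hb

theorem ordinalHeight_lt_of_mem_closureStep {S x : ZFSet.{u}} {o : Ordinal.{u}}
    (ho : IsSuccLimit o) (hS : ∀ t ∈ S, ordinalHeight t < o) (hx : x ∈ closureStep S) :
    ordinalHeight x < o := by
  rcases mem_closureStep.1 hx with ⟨t, ht, hxt⟩ | ⟨t, ht, rfl⟩ | ⟨t, ht, rfl⟩ | ⟨a, ha, b, hb, rfl⟩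
  · exact (ordinalHeight_le_succ_of_subset hxt).trans_lt (ho.succ_lt (hS t ht))
  · refine (ordinalHeight_le_succ fun y hy => ordinalHeight_le_succ_of_subset
      (mem_powerset.1 hy)).trans_lt (ho.succ_lt (ho.succ_lt (hS t ht)))
  · refine (ordinalHeight_le_succ fun y hy => ?_).trans_lt (ho.succ_lt (hS t ht))
    obtain ⟨z, hz, hyz⟩ := mem_sUnion.1 hy
    exact (ordinalHeight_le_ordinalHeight_of_mem hyz).trans
      (ordinalHeight_le_ordinalHeight_of_mem hz)
  · refine (ordinalHeight_le_succ fun y hy => ?_).trans_lt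
      (ho.succ_lt (max_lt (hS a ha) (hS b hb)))
    rcases mem_pair.1 hy with rfl | rfl
    · exact le_max_left _ _
    · exact le_max_right _ _

noncomputable def zermeloClosure (S : ZFSet.{u}) : ZFSet.{u} :=
  ⋃₀ range fun n : ℕ => closureStep^[n] S

section zermeloClosure

variable {S x : ZFSet.{u}}

theorem mem_zermeloClosure : x ∈ zermeloClosure S ↔ ∃ n, x ∈ closureStep^[n] S := by
  simp [zermeloClosure]

theorem monotone_iterate_closureStep (S : ZFSet.{u}) : Monotone fun n => closureStep^[n] S :=
  monotone_nat_of_le_succ fun n => by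
    rw [Function.iterate_succ_apply']
    exact subset_closureStep _

theorem subset_zermeloClosure (S : ZFSet.{u}) : S ⊆ zermeloClosure S :=
  fun _ hx => mem_zermeloClosure.2 ⟨0, hx⟩

theorem IsTransitive.iterate_closureStep (hS : S.IsTransitive) (n : ℕ) :
    (ZFSet.closureStep^[n] S).IsTransitive := by
  induction n with
  | zero => exact hS
  | succ n ih => exact (Function.iterate_succ_apply' .. ▸ ih.closureStep)

theorem IsTransitive.zermeloClosure (hS : S.IsTransitive) :
    (ZFSet.zermeloClosure S).IsTransitive := by
  intro x hx y hy
  obtain ⟨n, hn⟩ := mem_zermeloClosure.1 hx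
  exact mem_zermeloClosure.2 ⟨n, hS.iterate_closureStep n x hn hy⟩

theorem mem_zermeloClosure_of_mem_closureStep {n : ℕ} (h : x ∈ closureStep (closureStep^[n] S)) :
    x ∈ zermeloClosure S :=
  mem_zermeloClosure.2 ⟨n + 1, by rwa [Function.iterate_succ_apply']⟩

theorem mem_zermeloClosure_of_subset {t : ZFSet.{u}} (ht : t ∈ zermeloClosure S) (hxt : x ⊆ t) :
    x ∈ zermeloClosure S := by
  obtain ⟨n, hn⟩ := mem_zermeloClosure.1 ht
  exact mem_zermeloClosure_of_mem_closureStep (mem_closureStep.2 (Or.inl ⟨t, hn, hxt⟩))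

theorem powerset_mem_zermeloClosure (hx : x ∈ zermeloClosure S) :
    powerset x ∈ zermeloClosure S := by
  obtain ⟨n, hn⟩ := mem_zermeloClosure.1 hx
  exact mem_zermeloClosure_of_mem_closureStep (mem_closureStep.2 (Or.inr (Or.inl ⟨x, hn, rfl⟩)))

theorem sUnion_mem_zermeloClosure (hx : x ∈ zermeloClosure S) :
    ⋃₀ x ∈ zermeloClosure S := by
  obtain ⟨n, hn⟩ := mem_zermeloClosure.1 hx
  exact mem_zermeloClosure_of_mem_closureStep
    (mem_closureStep.2 (Or.inr (Or.inr (Or.inl ⟨x, hn, rfl⟩))))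

theorem pair_mem_zermeloClosure {y : ZFSet.{u}} (hx : x ∈ zermeloClosure S)
    (hy : y ∈ zermeloClosure S) : {x, y} ∈ zermeloClosure S := by
  obtain ⟨m, hm⟩ := mem_zermeloClosure.1 hx
  obtain ⟨n, hn⟩ := mem_zermeloClosure.1 hy
  have hm' := monotone_iterate_closureStep S (le_max_left m n) hm
  have hn' := monotone_iterate_closureStep S (le_max_right m n) hn
  exact mem_zermeloClosure_of_mem_closureStep
    (mem_closureStep.2 (Or.inr (Or.inr (Or.inr ⟨x, hm', y, hn', rfl⟩))))

theorem ordinalHeight_lt_of_mem_zermeloClosure {o : Ordinal.{u}} (ho : IsSuccLimit o)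
    (hS : ∀ t ∈ S, ordinalHeight t < o) (hx : x ∈ zermeloClosure S) : ordinalHeight x < o := by
  obtain ⟨n, hn⟩ := mem_zermeloClosure.1 hx
  clear hx
  induction n generalizing x with
  | zero => exact hS x hn
  | succ n ih =>
    rw [Function.iterate_succ_apply'] at hn
    exact ordinalHeight_lt_of_mem_closureStep ho (fun t ht => ih ht) hn

end zermeloClosure

theorem _root_.PSet.rank_ofNat (n : ℕ) : (PSet.ofNat.{u} n).rank = n := by
  induction n with
  | zero => exact PSet.rank_empty
  | succ n ih =>
    rw [PSet.ofNat, PSet.rank_insert, ih, max_eq_left (le_succ _), Nat.cast_succ,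
      succ_eq_add_one]

theorem rank_omega : rank omega.{u} = ω := by
  rw [omega, rank_mk]
  show ⨆ n : ULift ℕ, succ (PSet.ofNat n.down).rank = ω
  simp only [PSet.rank_ofNat]
  refine le_antisymm (Ordinal.iSup_le fun n => succ_le_of_lt (natCast_lt_omega0 _)) ?_
  exact omega0_le.2 fun n => (le_succ _).trans
    (Ordinal.le_iSup (fun n : ULift.{u} ℕ => succ (n.down : Ordinal.{u})) ⟨n⟩)

theorem omega_ne_empty : omega.{u} ≠ ∅ := fun h => notMem_empty ∅ (h ▸ omega_zero)

theorem rank_iterate_singleton (x : ZFSet.{u}) (n : ℕ) :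
    rank ((fun y => {y})^[n] x) = rank x + n := by
  induction n with
  | zero => simp
  | succ n ih =>
    rw [Function.iterate_succ_apply', rank_singleton, ih, Nat.cast_succ, ← add_assoc,
      succ_eq_add_one]

theorem iterate_singleton_ne_empty {x : ZFSet.{u}} (hx : x ≠ ∅) (n : ℕ) :
    (fun y => {y})^[n] x ≠ ∅ := by
  cases n with
  | zero => exact hx
  | succ n =>
    rw [Function.iterate_succ_apply']
    exact fun h => notMem_empty _ (h ▸ mem_singleton.2 rfl)

theorem ordinalHeight_iterate_singleton {x : ZFSet.{u}} (hx : x ≠ ∅) (n : ℕ) :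
    ordinalHeight ((fun y => {y})^[n] x) = ordinalHeight x := by
  induction n with
  | zero => rfl
  | succ n ih =>
    rw [Function.iterate_succ_apply', ordinalHeight_singleton (iterate_singleton_ne_empty hx n), ih]

noncomputable def singletonTower : ZFSet.{u} :=
  range fun n : ℕ => (fun y => {y})^[n] omega

theorem mem_singletonTower {x : ZFSet.{u}} :
    x ∈ singletonTower ↔ ∃ n : ℕ, (fun y => {y})^[n] omega = x :=
  mem_range

theorem rank_lt_of_mem_singletonTower {x : ZFSet.{u}} (hx : x ∈ singletonTower) :
    rank x < ω + ω := by
  obtain ⟨n, rfl⟩ := mem_singletonTower.1 hx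
  rw [rank_iterate_singleton, rank_omega]
  exact (add_lt_add_iff_left _).2 (natCast_lt_omega0 n)

theorem rank_singletonTower : rank singletonTower.{u} = ω + ω := by
  refine le_antisymm (rank_le_iff.2 fun x hx => rank_lt_of_mem_singletonTower hx) ?_
  rw [← iSup_add_natCast]
  refine Ordinal.iSup_le fun n => ?_
  have hn := rank_lt_of_mem (mem_singletonTower.{u}.2 ⟨n, rfl⟩)
  rw [rank_iterate_singleton, rank_omega] at hn
  exact hn.le

theorem not_isOrdinal_singletonTower : ¬ singletonTower.{u}.IsOrdinal := by
  intro h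
  obtain ⟨n, hn⟩ := mem_singletonTower.1 (h.mem_trans omega_zero (mem_singletonTower.2 ⟨0, rfl⟩))
  exact iterate_singleton_ne_empty omega_ne_empty n hn

theorem ordinalHeight_singletonTower : ordinalHeight singletonTower.{u} ≤ succ ω := by
  refine ordinalHeight_le_iff.2 ⟨fun h => (not_isOrdinal_singletonTower h).elim, ?_⟩
  intro x hx
  obtain ⟨n, rfl⟩ := mem_singletonTower.1 hx
  rw [ordinalHeight_iterate_singleton omega_ne_empty, ← rank_omega]
  exact ordinalHeight_le_succ_rank _

noncomputable def zermeloModel : ZFSet.{u} :=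
  zermeloClosure (insert singletonTower (vonNeumann (ω + ω)))

theorem isSuccLimit_omega0_add_omega0 : IsSuccLimit (ω + ω) :=
  isSuccLimit_add _ isSuccLimit_omega0

theorem isTransitive_zermeloModel : zermeloModel.{u}.IsTransitive := by
  refine IsTransitive.zermeloClosure fun x hx y hy => mem_insert_iff.2 (Or.inr ?_)
  rcases mem_insert_iff.1 hx with rfl | hx
  · exact mem_vonNeumann.2 (rank_lt_of_mem_singletonTower hy)
  · exact isTransitive_vonNeumann _ x hx hy

theorem mem_zermeloModel_of_rank_lt {x : ZFSet.{u}} (hx : rank x < ω + ω) : x ∈ zermeloModel :=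
  subset_zermeloClosure _ (mem_insert_iff.2 (Or.inr (mem_vonNeumann.2 hx)))

theorem singletonTower_mem_zermeloModel : singletonTower.{u} ∈ zermeloModel :=
  subset_zermeloClosure _ (mem_insert_iff.2 (Or.inl rfl))

theorem rank_lt_of_isOrdinal_mem_zermeloModel {a : ZFSet.{u}} (ha : a ∈ zermeloModel)
    (h : a.IsOrdinal) : rank a < ω + ω := by
  refine h.rank_lt_ordinalHeight.trans (ordinalHeight_lt_of_mem_zermeloClosure
    isSuccLimit_omega0_add_omega0 (fun t ht => ?_) ha)
  rcases mem_insert_iff.1 ht with rfl | ht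
  · exact ordinalHeight_singletonTower.trans_lt
      (isSuccLimit_omega0_add_omega0.succ_lt (lt_add_of_pos_right _ omega0_pos))
  · exact (ordinalHeight_le_succ_rank t).trans_lt
      (isSuccLimit_omega0_add_omega0.succ_lt (mem_vonNeumann.1 ht))

end ZFSet

open ZFSet

/-- There is a transitive set `M` of ordinal height `ω + ω` which is a model of
Zermelo set theory (extensionality and foundation hold automatically for
transitive sets; `M` contains `∅` and `ω` and satisfies pairing, union,
powerset, and separation) and which satisfies "for every ordinal `α`, `V_α`
exists" (here `V_α^M = {z ∈ M | rank z < α}`, which is the correct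
von Neumann hierarchy of `M` since `M` is transitive), but `M` is not the
union of its von Neumann hierarchy: some element of `M` belongs to no
`V_α^M`. -/
theorem exists_zermelo_model_not_union_of_hierarchy :
    ∃ M : ZFSet,
      M.IsTransitive ∧
      (∅ : ZFSet) ∈ M ∧
      ZFSet.omega ∈ M ∧
      (∀ x ∈ M, ∀ y ∈ M, ({x, y} : ZFSet) ∈ M) ∧
      (∀ x ∈ M, (ZFSet.sUnion x : ZFSet) ∈ M) ∧
      (∀ x ∈ M, ∃ p ∈ M, ∀ z ∈ M, (z ∈ p ↔ z ⊆ x)) ∧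
      (∀ x ∈ M, ∀ Φ : ZFSet → Prop, x.sep Φ ∈ M) ∧
      (∀ α : ZFSet, α.IsOrdinal →
        (α ∈ M ↔ ZFSet.rank α < omega0 + omega0)) ∧
      (∀ a ∈ M, a.IsOrdinal →
        ∃ v ∈ M, ∀ z : ZFSet, z ∈ v ↔ z ∈ M ∧ ZFSet.rank z < ZFSet.rank a) ∧
      (∃ z ∈ M, ∀ a ∈ M, a.IsOrdinal → ¬ ZFSet.rank z < ZFSet.rank a) := by
  refine ⟨zermeloModel, isTransitive_zermeloModel,
    mem_zermeloModel_of_rank_lt (by rw [rank_empty]; exact isSuccLimit_omega0_add_omega0.bot_lt),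
    mem_zermeloModel_of_rank_lt (by rw [rank_omega]; exact lt_add_of_pos_right _ omega0_pos),
    fun x hx y hy => pair_mem_zermeloClosure hx hy,
    fun x hx => sUnion_mem_zermeloClosure hx,
    fun x hx => ⟨powerset x, powerset_mem_zermeloClosure hx, fun z _ => mem_powerset⟩,
    fun x hx Φ => mem_zermeloClosure_of_subset hx sep_subset,
    fun α hα => ⟨fun h => rank_lt_of_isOrdinal_mem_zermeloModel h hα, mem_zermeloModel_of_rank_lt⟩,
    fun a ha hα => ?_, singletonTower, singletonTower_mem_zermeloModel, fun a ha hα => ?_⟩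
  · have ha' := rank_lt_of_isOrdinal_mem_zermeloModel ha hα
    refine ⟨vonNeumann (rank a), mem_zermeloModel_of_rank_lt (by rwa [rank_vonNeumann]),
      fun z => ?_⟩
    rw [mem_vonNeumann]
    exact ⟨fun hz => ⟨mem_zermeloModel_of_rank_lt (hz.trans ha'), hz⟩, And.right⟩
  · rw [rank_singletonTower, not_lt]
    exact (rank_lt_of_isOrdinal_mem_zermeloModel ha hα).le
end

section
/- Let δ be a cardinal, M a transitive model of ZFC⁻ with a largest cardinal κ, and P ∈ M a poset with |P|^M = γ where κ^γ = κ holds in M. Then the set P_{γ⁺}(κ)^M of M-subsets of κ of M-size at most γ is an element of M. -/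
/-!
A nonempty `A ⊆ κ` in `M` with an injection `f : A → γ` in `M` is the range of a function
`γ → κ` in `M`: invert `f` and send every point outside the range of `f` to a fixed `a₀ ∈ A`.
Conversely, the range of `h : γ → κ` injects into `γ` by sending each point to its least
preimage under a well-order of `γ` lying in `M`. Hence, with `F ∈ M` the set of functions
`γ → κ` of `M`, `P_{γ⁺}(κ)^M = {ran h | h ∈ F} ∪ {∅}`. This set lies in `M` by collection and
separation, since all sets involved are cut out of `F`, `γ` and `κ` by first-order formulas with
parameters in `M`.
-/

open FirstOrder

/-- `r ∈ M` is a well-order of the set `x` (coded as a set of Kuratowski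
pairs). -/
def IsWellOrderOn (r x : ZFSet) : Prop :=
  r ⊆ x.prod x ∧
    (∀ a ∈ x, ZFSet.pair a a ∉ r) ∧
    (∀ a ∈ x, ∀ b ∈ x, ∀ c ∈ x,
      ZFSet.pair a b ∈ r → ZFSet.pair b c ∈ r → ZFSet.pair a c ∈ r) ∧
    (∀ a ∈ x, ∀ b ∈ x, a ≠ b → (ZFSet.pair a b ∈ r ∨ ZFSet.pair b a ∈ r)) ∧
    (∀ s : ZFSet, s ⊆ x → s.Nonempty → ∃ m ∈ s, ∀ z ∈ s, ZFSet.pair z m ∉ r)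

/-- A transitive set `M` is a model of ZFC⁻ (ZFC without powerset, with the
collection scheme in place of replacement and the well-ordering principle in
place of choice). -/
structure IsZFCMinusModel (M : ZFSet) : Prop where
  transitive : M.IsTransitive
  empty_mem : (∅ : ZFSet) ∈ M
  pair_mem : ∀ x ∈ M, ∀ y ∈ M, ({x, y} : ZFSet) ∈ M
  union_mem : ∀ x ∈ M, (ZFSet.sUnion x : ZFSet) ∈ M
  omega_mem : ZFSet.omega ∈ M
  separation : ∀ (n : ℕ) (φ : memLang.BoundedFormula Empty (n + 1))
    (v : Fin n → M.toSet), ∀ x ∈ M, ∃ s ∈ M, ∀ z : ZFSet,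
      z ∈ s ↔ ∃ hz : z ∈ M, z ∈ x ∧ RealizeIn M.toSet φ (Fin.snoc v ⟨z, hz⟩)
  collection : ∀ (n : ℕ) (φ : memLang.BoundedFormula Empty (n + 2))
    (v : Fin n → M.toSet), ∀ x ∈ M,
    (∀ z, ∀ hz : z ∈ M, z ∈ x → ∃ w, ∃ hw : w ∈ M,
      RealizeIn M.toSet φ (Fin.snoc (Fin.snoc v ⟨z, hz⟩) ⟨w, hw⟩)) →
    ∃ c ∈ M, ∀ z, ∀ hz : z ∈ M, z ∈ x → ∃ w, ∃ hw : w ∈ M, w ∈ c ∧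
      RealizeIn M.toSet φ (Fin.snoc (Fin.snoc v ⟨z, hz⟩) ⟨w, hw⟩)
  wellOrdering : ∀ x ∈ M, ∃ r ∈ M, IsWellOrderOn r x

/-- `f` is an injective function from `A` to `B`. -/
def FuncInj (f A B : ZFSet) : Prop :=
  ZFSet.IsFunc A B f ∧
    ∀ a ∈ A, ∀ a' ∈ A, ∀ b : ZFSet,
      ZFSet.pair a b ∈ f → ZFSet.pair a' b ∈ f → a = a'

/-- `f` is a bijection from `A` onto `B`. -/
def FuncBij (f A B : ZFSet) : Prop :=
  FuncInj f A B ∧ ∀ b ∈ B, ∃ a ∈ A, ZFSet.pair a b ∈ f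

/-- `κ` is a cardinal in the model `Mdl`: an ordinal not surjected onto by any
smaller ordinal via a function in `Mdl`. -/
def IsCardinalIn (Mdl κ : ZFSet) : Prop :=
  κ.IsOrdinal ∧ ∀ β ∈ κ, ∀ f ∈ Mdl, ZFSet.IsFunc β κ f →
    ∃ b ∈ κ, ∀ a ∈ β, ZFSet.pair a b ∉ f

open Language ZFSet

theorem Fin.snoc_snoc_eq_append {α : Type*} {n : ℕ} (p : Fin n → α) (z w : α) :
    (Fin.snoc (Fin.snoc p z) w : Fin (n + 2) → α) = Fin.append p ![z, w] := by
  have := Fin.append_right_eq_snoc (Fin.snoc p z) ![w]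
  rw [Fin.append_left_snoc] at this
  exact this.symm

theorem ZFSet.pair_mem_pairSep {p : ZFSet → ZFSet → Prop} {x y a b : ZFSet} :
    pair a b ∈ pairSep p x y ↔ a ∈ x ∧ b ∈ y ∧ p a b := by
  simp

theorem ZFSet.pairSep_subset_prod {p : ZFSet → ZFSet → Prop} {x y : ZFSet} :
    pairSep p x y ⊆ x.prod y := by
  intro z hz
  obtain ⟨a, ha, b, hb, rfl, -⟩ := mem_pairSep.1 hz
  exact pair_mem_prod.2 ⟨ha, hb⟩

theorem ZFSet.IsTransitive.eq_iff_forall_mem {M x y : ZFSet} (hT : M.IsTransitive) (hx : x ∈ M)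
    (hy : y ∈ M) :
    x = y ↔ ∀ z ∈ M, z ∈ x ↔ z ∈ y :=
  ⟨fun h _ _ => h ▸ Iff.rfl, fun h => ext fun z =>
    ⟨fun hz => (h z (hT.mem_trans hz hx)).1 hz, fun hz => (h z (hT.mem_trans hz hy)).2 hz⟩⟩

theorem funcInj_empty (B : ZFSet) : FuncInj ∅ ∅ B :=
  ⟨⟨empty_subset _, fun _ h => absurd h (notMem_empty _)⟩,
    fun _ h => absurd h (notMem_empty _)⟩

section Definability

variable {M : ZFSet} {α β : Type}

/-- `P` is defined on tuples from `M` by a first-order formula with parameters from `M`. -/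
def DefinableIn (M : ZFSet) {α : Type} (P : (α → ZFSet) → Prop) : Prop :=
  (Set.univ : Set M.toSet).Definable memLang {v | P fun a => v a}

theorem DefinableIn.of_iff {P Q : (α → ZFSet) → Prop} (hP : DefinableIn M P)
    (hPQ : ∀ v : α → ZFSet, (∀ a, v a ∈ M) → (P v ↔ Q v)) : DefinableIn M Q := by
  have hPQ' : {v : α → M.toSet | P fun a => v a} = {v | Q fun a => v a} :=
    Set.ext fun v => hPQ _ fun a => (v a).2
  rw [DefinableIn, ← hPQ']
  exact hP

theorem definableIn_var_mem (a b : α) : DefinableIn M fun v => v a ∈ v b := by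
  rw [DefinableIn, Set.definable_iff_exists_formula_sum]
  refine ⟨Relations.formula₂ (L := memLang) PUnit.unit (Term.var (.inr a)) (Term.var (.inr b)), ?_⟩
  ext v
  simp only [Set.mem_ofPred_eq]
  rfl

theorem definableIn_var_eq (a b : α) : DefinableIn M fun v => v a = v b := by
  rw [DefinableIn, Set.definable_iff_exists_formula_sum]
  refine ⟨Term.equal (L := memLang) (Term.var (.inr a)) (Term.var (.inr b)), ?_⟩
  ext v
  simp [Subtype.ext_iff]

theorem definableIn_var_eq_const (a : α) {c : ZFSet} (hc : c ∈ M) :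
    DefinableIn M fun v => v a = c := by
  rw [DefinableIn, Set.definable_iff_exists_formula_sum]
  refine ⟨Term.equal (L := memLang) (Term.var (.inr a)) (Term.var (.inl ⟨⟨c, hc⟩, trivial⟩)), ?_⟩
  ext v
  simp [Subtype.ext_iff]

theorem DefinableIn.and {P Q : (α → ZFSet) → Prop} (hP : DefinableIn M P)
    (hQ : DefinableIn M Q) : DefinableIn M fun v => P v ∧ Q v :=
  Set.Definable.inter hP hQ

theorem DefinableIn.or {P Q : (α → ZFSet) → Prop} (hP : DefinableIn M P)
    (hQ : DefinableIn M Q) : DefinableIn M fun v => P v ∨ Q v :=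
  Set.Definable.union hP hQ

theorem DefinableIn.not {P : (α → ZFSet) → Prop} (hP : DefinableIn M P) :
    DefinableIn M fun v => ¬ P v :=
  Set.Definable.compl hP

theorem DefinableIn.imp {P Q : (α → ZFSet) → Prop} (hP : DefinableIn M P)
    (hQ : DefinableIn M Q) : DefinableIn M fun v => P v → Q v :=
  (hP.not.or hQ).of_iff fun _ _ => imp_iff_not_or.symm

theorem DefinableIn.iff {P Q : (α → ZFSet) → Prop} (hP : DefinableIn M P)
    (hQ : DefinableIn M Q) : DefinableIn M fun v => P v ↔ Q v :=
  ((hP.imp hQ).and (hQ.imp hP)).of_iff fun _ _ => iff_iff_implies_and_implies.symm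

theorem DefinableIn.comp {P : (α → ZFSet) → Prop} (hP : DefinableIn M P) (f : α → β) :
    DefinableIn M fun v => P (v ∘ f) :=
  Set.Definable.preimage_comp f hP

theorem DefinableIn.exists {Q : ZFSet → (α → ZFSet) → Prop}
    (hQ : DefinableIn M fun w : Option α → ZFSet => Q (w none) (w ∘ some)) :
    DefinableIn M fun v => ∃ x ∈ M, Q x v := by
  have := Set.Definable.exists_of_finite (β := Unit)
    (hQ.comp (Option.elim · (Sum.inr ()) Sum.inl))
  unfold DefinableIn
  convert this using 2
  funext v
  refine propext ⟨?_, ?_⟩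
  · rintro ⟨x, hx, hQx⟩
    exact ⟨fun _ => ⟨x, hx⟩, hQx⟩
  · rintro ⟨u, hu⟩
    exact ⟨u (), (u ()).2, hu⟩

theorem DefinableIn.forall {Q : ZFSet → (α → ZFSet) → Prop}
    (hQ : DefinableIn M fun w : Option α → ZFSet => Q (w none) (w ∘ some)) :
    DefinableIn M fun v => ∀ x ∈ M, Q x v :=
  (DefinableIn.exists (Q := fun x v => ¬ Q x v) hQ.not).not.of_iff fun _ _ => by
    simp only [not_exists, not_and, not_not]

structure DefinableFunIn (M : ZFSet) {α : Type} (t : (α → ZFSet) → ZFSet) : Prop where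
  mem : ∀ v : α → ZFSet, (∀ a, v a ∈ M) → t v ∈ M
  graph : DefinableIn M fun w : Option α → ZFSet => w none = t (w ∘ some)

theorem DefinableFunIn.var (a : α) : DefinableFunIn M fun v => v a :=
  ⟨fun _ hv => hv a, definableIn_var_eq none (some a)⟩

theorem DefinableFunIn.const {c : ZFSet} (hc : c ∈ M) : DefinableFunIn M fun _ : α → ZFSet => c :=
  ⟨fun _ _ => hc, definableIn_var_eq_const none hc⟩

theorem DefinableFunIn.comp {t : (α → ZFSet) → ZFSet} (ht : DefinableFunIn M t) (f : α → β) :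
    DefinableFunIn M fun v => t (v ∘ f) :=
  ⟨fun _ hv => ht.mem _ fun a => hv (f a), ht.graph.comp (Option.map f)⟩

theorem DefinableIn.subst {Q : ZFSet → (α → ZFSet) → Prop} {t : (α → ZFSet) → ZFSet}
    (hQ : DefinableIn M fun w : Option α → ZFSet => Q (w none) (w ∘ some))
    (ht : DefinableFunIn M t) : DefinableIn M fun v => Q (t v) v :=
  (DefinableIn.exists (Q := fun x v => x = t v ∧ Q x v) (ht.graph.and hQ)).of_iff fun v hv =>
    ⟨fun ⟨_, _, hx, h⟩ => hx ▸ h, fun h => ⟨t v, ht.mem v hv, rfl, h⟩⟩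

theorem definableIn_mem {s t : (α → ZFSet) → ZFSet} (hs : DefinableFunIn M s)
    (ht : DefinableFunIn M t) : DefinableIn M fun v => s v ∈ t v :=
  DefinableIn.subst (Q := fun x v => x ∈ t v)
    (DefinableIn.subst (Q := fun y w => w none ∈ y) (definableIn_var_mem (some none) none)
      (ht.comp some)) hs

theorem definableIn_eq {s t : (α → ZFSet) → ZFSet} (hs : DefinableFunIn M s)
    (ht : DefinableFunIn M t) : DefinableIn M fun v => s v = t v :=
  DefinableIn.subst (Q := fun x v => x = t v)
    (DefinableIn.subst (Q := fun y w => w none = y) (definableIn_var_eq (some none) none)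
      (ht.comp some)) hs

section Transitive

variable (hT : M.IsTransitive)
include hT

theorem DefinableIn.exists_mem {c : ZFSet} (hc : c ∈ M) {Q : ZFSet → (α → ZFSet) → Prop}
    (hQ : DefinableIn M fun w : Option α → ZFSet => Q (w none) (w ∘ some)) :
    DefinableIn M fun v => ∃ x ∈ c, Q x v :=
  (DefinableIn.exists (Q := fun x v => x ∈ c ∧ Q x v)
      ((definableIn_mem (.var none) (.const hc)).and hQ)).of_iff fun _ _ =>
    ⟨fun ⟨x, _, hxc, hx⟩ => ⟨x, hxc, hx⟩, fun ⟨x, hxc, hx⟩ => ⟨x, hT.mem_trans hxc hc, hxc, hx⟩⟩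

theorem DefinableIn.forall_mem {c : ZFSet} (hc : c ∈ M) {Q : ZFSet → (α → ZFSet) → Prop}
    (hQ : DefinableIn M fun w : Option α → ZFSet => Q (w none) (w ∘ some)) :
    DefinableIn M fun v => ∀ x ∈ c, Q x v :=
  (DefinableIn.forall (Q := fun x v => x ∈ c → Q x v)
      ((definableIn_mem (.var none) (.const hc)).imp hQ)).of_iff fun _ _ =>
    ⟨fun h x hxc => h x (hT.mem_trans hxc hc) hxc, fun h x _ hxc => h x hxc⟩

theorem definableIn_var_eq_pairSet (a b c : α) : DefinableIn M fun v => v a = {v b, v c} := by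
  refine (DefinableIn.forall (Q := fun x v => x ∈ v a ↔ x = v b ∨ x = v c)
    ((definableIn_var_mem none (some a)).iff
      ((definableIn_var_eq none (some b)).or (definableIn_var_eq none (some c))))).of_iff
    fun v hv => ?_
  rw [ZFSet.ext_iff]
  simp only [mem_pair]
  refine ⟨fun h x => ⟨fun hx => (h x (hT.mem_trans hx (hv a))).1 hx, fun hx => ?_⟩,
    fun h x _ => h x⟩
  exact (h x (by rcases hx with rfl | rfl <;> exact hv _)).2 hx

end Transitive

/-- The finitely many parameters of the defining formula become its first `n` variables. -/
theorem DefinableIn.exists_boundedFormula {k : ℕ} {P : (Fin k → ZFSet) → Prop}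
    (hP : DefinableIn M P) :
    ∃ (n : ℕ) (φ : memLang.BoundedFormula Empty (n + k)) (p : Fin n → M.toSet),
      ∀ xs : Fin k → M.toSet, RealizeIn M.toSet φ (Fin.append p xs) ↔ P fun i => xs i := by
  classical
  obtain ⟨A, -, hA⟩ := Set.definable_iff_finitely_definable.1 hP
  obtain ⟨φ, hφ⟩ := Set.definable_iff_exists_formula_sum.1 hA
  let e := Fintype.equivFin (A : Set M.toSet)
  let g : (A : Set M.toSet) ⊕ Fin k → Empty ⊕ Fin (Fintype.card (A : Set M.toSet) + k) :=
    Sum.elim (fun a => Sum.inr (Fin.castAdd k (e a))) (fun i => Sum.inr (Fin.natAdd _ i))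
  refine ⟨_, BoundedFormula.relabel (k := 0) g φ, fun i => e.symm i, fun xs => ?_⟩
  have := congrArg (xs ∈ ·) hφ
  simp only [eq_iff_iff, Set.mem_ofPred_eq] at this
  rw [this, RealizeIn, BoundedFormula.realize_relabel, Formula.Realize]
  refine iff_of_eq (congrArg₂ _ ?_ (Subsingleton.elim _ _))
  funext a
  rcases a with a | i <;> simp [g]

end Definability

namespace IsZFCMinusModel

variable {M : ZFSet} (hM : IsZFCMinusModel M)
include hM

theorem singleton_mem {a : ZFSet} (ha : a ∈ M) : ({a} : ZFSet) ∈ M :=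
  pair_eq_singleton a ▸ hM.pair_mem a ha a ha

theorem orderedPair_mem {a b : ZFSet} (ha : a ∈ M) (hb : b ∈ M) : pair a b ∈ M :=
  hM.pair_mem _ (hM.singleton_mem ha) _ (hM.pair_mem a ha b hb)

theorem binaryUnion_mem {x y : ZFSet} (hx : x ∈ M) (hy : y ∈ M) : x ∪ y ∈ M :=
  hM.union_mem _ (hM.pair_mem x hx y hy)

theorem definableIn_var_eq_pair {α : Type} (a b c : α) :
    DefinableIn M fun v => v a = pair (v b) (v c) := by
  refine (DefinableIn.forall (Q := fun x v => x ∈ v a ↔ x = {v b, v b} ∨ x = {v b, v c})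
    ((definableIn_var_mem none (some a)).iff
      ((definableIn_var_eq_pairSet hM.transitive none (some b) (some b)).or
        (definableIn_var_eq_pairSet hM.transitive none (some b) (some c))))).of_iff
    fun v hv => ?_
  rw [hM.transitive.eq_iff_forall_mem (hv a) (hM.orderedPair_mem (hv b) (hv c)), pair,
    pair_eq_singleton]
  simp only [mem_pair]

theorem _root_.DefinableFunIn.pair {α : Type} {s t : (α → ZFSet) → ZFSet}
    (hs : DefinableFunIn M s) (ht : DefinableFunIn M t) :
    DefinableFunIn M fun v => ZFSet.pair (s v) (t v) where
  mem v hv := hM.orderedPair_mem (hs.mem v hv) (ht.mem v hv)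
  graph := DefinableIn.subst (Q := fun x w => w none = ZFSet.pair x (t (w ∘ some)))
    (DefinableIn.subst (Q := fun y u => (u ∘ some) none = ZFSet.pair (u none) y)
      (hM.definableIn_var_eq_pair (some (some none)) (some none) none)
      ((ht.comp some).comp some))
    (hs.comp some)

theorem sep_mem {p : ZFSet → Prop} (hp : DefinableIn M fun v : Fin 1 → ZFSet => p (v 0))
    {x : ZFSet} (hx : x ∈ M) : x.sep p ∈ M := by
  obtain ⟨n, φ, ps, hφ⟩ := hp.exists_boundedFormula
  have hφ' : ∀ z (hz : z ∈ M), RealizeIn M.toSet φ (Fin.snoc ps ⟨z, hz⟩) ↔ p z := fun z hz => by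
    rw [← hφ fun _ => ⟨z, hz⟩, Fin.append_right_eq_snoc]
  obtain ⟨s, hs, hsx⟩ := hM.separation n φ ps x hx
  convert hs using 1
  ext z
  rw [mem_sep, hsx]
  exact ⟨fun ⟨hzx, hpz⟩ => ⟨hM.transitive.mem_trans hzx hx, hzx, (hφ' z _).2 hpz⟩,
    fun ⟨hz, hzx, hφz⟩ => ⟨hzx, (hφ' z hz).1 hφz⟩⟩

theorem exists_collect {R : ZFSet → ZFSet → Prop}
    (hR : DefinableIn M fun v : Fin 2 → ZFSet => R (v 0) (v 1)) {x : ZFSet} (hx : x ∈ M)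
    (h : ∀ z ∈ x, ∃ w ∈ M, R z w) : ∃ c ∈ M, ∀ z ∈ x, ∃ w ∈ c, R z w := by
  obtain ⟨n, φ, ps, hφ⟩ := hR.exists_boundedFormula
  have hφ' : ∀ z (hz : z ∈ M) w (hw : w ∈ M),
      RealizeIn M.toSet φ (Fin.snoc (Fin.snoc ps ⟨z, hz⟩) ⟨w, hw⟩) ↔ R z w := fun z hz w hw => by
    rw [Fin.snoc_snoc_eq_append, hφ]
    rfl
  obtain ⟨c, hc, hcx⟩ := hM.collection n φ ps x hx fun z _ hzx =>
    let ⟨w, hw, hR⟩ := h z hzx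
    ⟨w, hw, (hφ' z _ w hw).2 hR⟩
  refine ⟨c, hc, fun z hzx => ?_⟩
  obtain ⟨w, hw, hwc, hφw⟩ := hcx z (hM.transitive.mem_trans hzx hx) hzx
  exact ⟨w, hwc, (hφ' z _ w hw).1 hφw⟩

theorem exists_image {G : ZFSet → ZFSet} (hG : DefinableFunIn M fun v : Fin 1 → ZFSet => G (v 0))
    {x : ZFSet} (hx : x ∈ M) : ∃ S ∈ M, ∀ y, y ∈ S ↔ ∃ z ∈ x, G z = y := by
  obtain ⟨c, hc, hcx⟩ := hM.exists_collect (R := fun z w => w = G z)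
    (definableIn_eq (.var 1) (hG.comp fun _ => 0)) hx
    fun z hz => ⟨G z, hG.mem (fun _ => z) fun _ => hM.transitive.mem_trans hz hx, rfl⟩
  refine ⟨c.sep fun y => ∃ z ∈ x, G z = y,
    hM.sep_mem (.exists_mem hM.transitive hx (definableIn_eq (hG.comp fun _ => none) (.var _))) hc,
    fun y => ⟨fun hy => (mem_sep.1 hy).2, fun hy => mem_sep.2 ⟨?_, hy⟩⟩⟩
  obtain ⟨z, hz, rfl⟩ := hy
  obtain ⟨w, hwc, rfl⟩ := hcx z hz
  exact hwc

theorem exists_prod_subset {x y : ZFSet} (hx : x ∈ M) (hy : y ∈ M) :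
    ∃ W ∈ M, x.prod y ⊆ W := by
  have hrow : ∀ a ∈ M, ∃ c ∈ M, ∀ b ∈ y, pair a b ∈ c := fun a ha => by
    obtain ⟨c, hc, hcy⟩ := hM.exists_collect (R := fun b w => w = pair a b)
      (definableIn_eq (.var 1) (.pair hM (.const ha) (.var 0))) hy
      fun b hb => ⟨_, hM.orderedPair_mem ha (hM.transitive.mem_trans hb hy), rfl⟩
    refine ⟨c, hc, fun b hb => ?_⟩
    obtain ⟨w, hwc, rfl⟩ := hcy b hb
    exact hwc
  obtain ⟨C, hC, hCx⟩ := hM.exists_collect (R := fun a c => ∀ b ∈ y, pair a b ∈ c)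
    (.forall_mem hM.transitive hy (definableIn_mem (.pair hM (.var _) (.var _)) (.var _))) hx
    fun a ha => hrow a (hM.transitive.mem_trans ha hx)
  refine ⟨sUnion C, hM.union_mem C hC, fun z hz => ?_⟩
  obtain ⟨a, ha, b, hb, rfl⟩ := mem_prod.1 hz
  obtain ⟨c, hcC, hc⟩ := hCx a ha
  exact mem_sUnion_of_mem (hc b hb) hcC

theorem pairSep_mem {p : ZFSet → ZFSet → Prop}
    (hp : DefinableIn M fun v : Fin 2 → ZFSet => p (v 0) (v 1)) {x y : ZFSet} (hx : x ∈ M)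
    (hy : y ∈ M) : pairSep p x y ∈ M := by
  obtain ⟨W, hW, hxyW⟩ := hM.exists_prod_subset hx hy
  convert hM.sep_mem (p := fun z => ∃ a ∈ x, ∃ b ∈ y, z = pair a b ∧ p a b) ?_ hW using 1
  · ext z
    rw [mem_sep, ← mem_pairSep]
    exact ⟨fun h => ⟨hxyW (pairSep_subset_prod h), h⟩, And.right⟩
  · exact .exists_mem hM.transitive hx (.exists_mem hM.transitive hy
      ((definableIn_eq (.var _) (.pair hM (.var _) (.var _))).and (hp.comp ![some none, none])))

end IsZFCMinusModel

section Ranges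

variable {h r f γ κ A a₀ : ZFSet}

def funRange (h γ κ : ZFSet) : ZFSet :=
  κ.sep fun b => ∃ a ∈ γ, pair a b ∈ h

def leastInverse (h r γ κ : ZFSet) : ZFSet :=
  pairSep (fun b a => pair a b ∈ h ∧ ∀ a' ∈ γ, pair a' a ∈ r → pair a' b ∉ h) κ γ

def extendInverse (f a₀ γ κ : ZFSet) : ZFSet :=
  pairSep (fun a b => pair b a ∈ f ∨ (b = a₀ ∧ ∀ b' ∈ κ, pair b' a ∉ f)) γ κ

theorem funcInj_leastInverse (hh : IsFunc γ κ h) (hr : IsWellOrderOn r γ) :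
    FuncInj (leastInverse h r γ κ) (funRange h γ κ) γ := by
  obtain ⟨-, -, -, htri, hmin⟩ := hr
  refine ⟨⟨fun z hz => ?_, fun b hb => ?_⟩, fun b _ b' _ a hba hb'a => ?_⟩
  · obtain ⟨b, hbκ, a, haγ, rfl, hab, -⟩ := mem_pairSep.1 hz
    exact pair_mem_prod.2 ⟨mem_sep.2 ⟨hbκ, a, haγ, hab⟩, haγ⟩
  · obtain ⟨hbκ, a, haγ, hab⟩ := mem_sep.1 hb
    obtain ⟨m, hm, hmin⟩ := hmin (γ.sep fun a => pair a b ∈ h) sep_subset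
      ⟨a, mem_sep.2 ⟨haγ, hab⟩⟩
    obtain ⟨hmγ, hmb⟩ := mem_sep.1 hm
    refine ⟨m, pair_mem_pairSep.2 ⟨hbκ, hmγ, hmb, fun a' ha'γ ha'm ha'b =>
      hmin a' (mem_sep.2 ⟨ha'γ, ha'b⟩) ha'm⟩, fun a' ha' => ?_⟩
    obtain ⟨-, ha'γ, ha'b, ha'min⟩ := pair_mem_pairSep.1 ha'
    by_contra hne
    rcases htri a' ha'γ m hmγ hne with ha'm | hma'
    · exact hmin a' (mem_sep.2 ⟨ha'γ, ha'b⟩) ha'm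
    · exact ha'min m hmγ hma' hmb
  · obtain ⟨-, haγ, hab, -⟩ := pair_mem_pairSep.1 hba
    obtain ⟨-, -, hab', -⟩ := pair_mem_pairSep.1 hb'a
    exact (hh.2 a haγ).unique hab hab'

theorem isFunc_extendInverse (hf : FuncInj f A γ) (hAκ : A ⊆ κ) (ha₀ : a₀ ∈ A) :
    IsFunc γ κ (extendInverse f a₀ γ κ) := by
  obtain ⟨⟨hfsub, -⟩, hfinj⟩ := hf
  refine ⟨pairSep_subset_prod, fun a ha => ?_⟩
  by_cases hpre : ∃ b ∈ κ, pair b a ∈ f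
  · obtain ⟨b, hbκ, hba⟩ := hpre
    refine ⟨b, pair_mem_pairSep.2 ⟨ha, hbκ, Or.inl hba⟩, fun b' hb' => ?_⟩
    obtain ⟨-, -, hb'a | ⟨-, hno⟩⟩ := pair_mem_pairSep.1 hb'
    · exact hfinj b' (pair_mem_prod.1 (hfsub hb'a)).1 b
        (pair_mem_prod.1 (hfsub hba)).1 a hb'a hba
    · exact absurd hba (hno b hbκ)
  · simp only [not_exists, not_and] at hpre
    refine ⟨a₀, pair_mem_pairSep.2 ⟨ha, hAκ ha₀, Or.inr ⟨rfl, hpre⟩⟩, fun b' hb' => ?_⟩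
    obtain ⟨-, hb'κ, hb'a | ⟨rfl, -⟩⟩ := pair_mem_pairSep.1 hb'
    · exact absurd hb'a (hpre b' hb'κ)
    · rfl

theorem funRange_extendInverse (hf : FuncInj f A γ) (hAκ : A ⊆ κ) (ha₀ : a₀ ∈ A) :
    funRange (extendInverse f a₀ γ κ) γ κ = A := by
  obtain ⟨⟨hfsub, hftot⟩, -⟩ := hf
  ext b
  rw [funRange, mem_sep]
  constructor
  · rintro ⟨-, a, -, hab⟩
    obtain ⟨-, -, hba | ⟨rfl, -⟩⟩ := pair_mem_pairSep.1 hab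
    · exact (pair_mem_prod.1 (hfsub hba)).1
    · exact ha₀
  · intro hb
    obtain ⟨a, hba, -⟩ := hftot b hb
    have haγ := (pair_mem_prod.1 (hfsub hba)).2
    exact ⟨hAκ hb, a, haγ, pair_mem_pairSep.2 ⟨haγ, hAκ hb, Or.inl hba⟩⟩

variable {M : ZFSet} (hM : IsZFCMinusModel M) (hγ : γ ∈ M) (hκ : κ ∈ M)
include hM hγ hκ

theorem funRange_mem (hh : h ∈ M) : funRange h γ κ ∈ M :=
  hM.sep_mem (.exists_mem hM.transitive hγ
    (definableIn_mem (.pair hM (.var _) (.var _)) (.const hh))) hκ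

theorem leastInverse_mem (hh : h ∈ M) (hr : r ∈ M) : leastInverse h r γ κ ∈ M :=
  hM.pairSep_mem ((definableIn_mem (.pair hM (.var _) (.var _)) (.const hh)).and
    (.forall_mem hM.transitive hγ ((definableIn_mem (.pair hM (.var _) (.var _)) (.const hr)).imp
      (definableIn_mem (.pair hM (.var _) (.var _)) (.const hh)).not))) hκ hγ

theorem extendInverse_mem (hf : f ∈ M) (ha₀ : a₀ ∈ M) : extendInverse f a₀ γ κ ∈ M :=
  hM.pairSep_mem ((definableIn_mem (.pair hM (.var _) (.var _)) (.const hf)).or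
    ((definableIn_eq (.var _) (.const ha₀)).and (.forall_mem hM.transitive hκ
      (definableIn_mem (.pair hM (.var _) (.var _)) (.const hf)).not))) hγ hκ

theorem definableFunIn_funRange : DefinableFunIn M fun v : Fin 1 → ZFSet => funRange (v 0) γ κ where
  mem v hv := funRange_mem hM hγ hκ (hv 0)
  graph := by
    refine (DefinableIn.forall
      (Q := fun b w => b ∈ w none ↔ b ∈ κ ∧ ∃ a ∈ γ, pair a b ∈ w (some 0))
      ((definableIn_mem (.var _) (.var _)).iff ((definableIn_mem (.var _) (.const hκ)).and
        (.exists_mem hM.transitive hγ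
          (definableIn_mem (.pair hM (.var _) (.var _)) (.var _)))))).of_iff fun w hw => ?_
    rw [Function.comp_apply,
      hM.transitive.eq_iff_forall_mem (hw none) (funRange_mem hM hγ hκ (hw (some 0)))]
    simp only [funRange, mem_sep]

end Ranges

theorem small_subsets_set_in_model_general (M : ZFSet)
    (hM : IsZFCMinusModel M)
    (κ : ZFSet) (hκM : κ ∈ M)
    (γ : ZFSet) (hγM : γ ∈ M)
    (hexp : ∃ F ∈ M, (∀ h : ZFSet, h ∈ F ↔ h ∈ M ∧ ZFSet.IsFunc γ κ h) ∧
      ∃ b ∈ M, FuncBij b F κ) :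
    ∃ S ∈ M, ∀ A : ZFSet,
      A ∈ S ↔ (A ∈ M ∧ A ⊆ κ ∧ ∃ f ∈ M, FuncInj f A γ) := by
  obtain ⟨F, hFM, hF, -⟩ := hexp
  obtain ⟨r, hrM, hr⟩ := hM.wellOrdering γ hγM
  obtain ⟨R, hRM, hR⟩ :=
    hM.exists_image (G := (funRange · γ κ)) (definableFunIn_funRange hM hγM hκM) hFM
  refine ⟨R ∪ {∅}, hM.binaryUnion_mem hRM (hM.singleton_mem hM.empty_mem), fun A => ?_⟩
  rw [mem_union, mem_singleton, hR]
  constructor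
  · rintro (⟨h, hhF, rfl⟩ | rfl)
    · obtain ⟨hhM, hh⟩ := (hF h).1 hhF
      exact ⟨funRange_mem hM hγM hκM hhM, sep_subset, _,
        leastInverse_mem hM hγM hκM hhM hrM, funcInj_leastInverse hh hr⟩
    · exact ⟨hM.empty_mem, empty_subset κ, ∅, hM.empty_mem, funcInj_empty γ⟩
  · rintro ⟨hAM, hAκ, f, hfM, hf⟩
    obtain rfl | ⟨a₀, ha₀⟩ := A.eq_empty_or_nonempty
    · exact Or.inr rfl
    · have hextM := extendInverse_mem hM hγM hκM hfM (hM.transitive.mem_trans ha₀ hAM)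
      exact Or.inl ⟨_, (hF _).2 ⟨hextM, isFunc_extendInverse hf hAκ ha₀⟩,
        funRange_extendInverse hf hAκ ha₀⟩

/-- Let `M` be a transitive model of ZFC⁻ whose largest cardinal is `κ`, and
let `P ∈ M` be a poset with `|P|^M = γ`, where `κ^γ = κ` holds in `M` (i.e.
the set `F` of functions `γ → κ` of `M` exists in `M` and is in bijection with
`κ` via a function of `M`).  Then the collection `P_{γ⁺}(κ)^M` of subsets of
`κ` in `M` of `M`-size at most `γ` is an element of `M`. -/
theorem small_subsets_set_in_model (δ : ZFSet) (M : ZFSet)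
    (hM : IsZFCMinusModel M)
    (κ : ZFSet) (hκM : κ ∈ M) (hκcard : IsCardinalIn M κ)
    (hκlargest : ∀ lam ∈ M, IsCardinalIn M lam → lam ⊆ κ)
    (P : ZFSet) (hPM : P ∈ M)
    (γ : ZFSet) (hγM : γ ∈ M) (hγcard : IsCardinalIn M γ)
    (hPγ : ∃ f ∈ M, FuncBij f P γ)
    (hexp : ∃ F ∈ M, (∀ h : ZFSet, h ∈ F ↔ h ∈ M ∧ ZFSet.IsFunc γ κ h) ∧
      ∃ b ∈ M, FuncBij b F κ) :
    ∃ S ∈ M, ∀ A : ZFSet,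
      A ∈ S ↔ (A ∈ M ∧ A ⊆ κ ∧ ∃ f ∈ M, FuncInj f A γ) :=
  small_subsets_set_in_model_general M hM κ hκM γ hγM hexp
end
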